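/- arXiv:1603.04068 — 5 statements merged into one kernel-verified Lean document; each statement's English description precedes it below -/
import Mathlib

section
/- A strategy profile (U,D) is an optimal strategy (i.e., maximizes u over all pairs of row-stochastic matrices) if and only if it is a Nash equilibrium with maximal payoff among all Nash equilibria (an efficient equilibrium). In particular, every optimal strategy profile is a Nash equilibrium, and a maximizer of u exists. -/
open Finset

def RowStochastic {a b : ℕ} (M : Matrix (Fin a) (Fin b) ℝ) : Prop :=
  (∀ i j, 0 ≤ M i j) ∧ ∀ i, ∑ j, M i j = 1

def payoff {m n o : ℕ} (π : Fin m → ℝ) (r : Fin m → Fin o → ℝ)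
    (U : Matrix (Fin m) (Fin n) ℝ) (D : Matrix (Fin n) (Fin o) ℝ) : ℝ :=
  ∑ i, π i * ∑ j, U i j * ∑ l, D j l * r i l

def Nash {m n o : ℕ} (π : Fin m → ℝ) (r : Fin m → Fin o → ℝ)
    (U : Matrix (Fin m) (Fin n) ℝ) (D : Matrix (Fin n) (Fin o) ℝ) : Prop :=
  RowStochastic U ∧ RowStochastic D ∧
    (∀ U', RowStochastic U' → payoff π r U' D ≤ payoff π r U D) ∧
    (∀ D', RowStochastic D' → payoff π r U D' ≤ payoff π r U D)

def Optimal {m n o : ℕ} (π : Fin m → ℝ) (r : Fin m → Fin o → ℝ)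
    (U : Matrix (Fin m) (Fin n) ℝ) (D : Matrix (Fin n) (Fin o) ℝ) : Prop :=
  RowStochastic U ∧ RowStochastic D ∧
    ∀ (U' : Matrix (Fin m) (Fin n) ℝ) (D' : Matrix (Fin n) (Fin o) ℝ),
      RowStochastic U' → RowStochastic D' → payoff π r U' D' ≤ payoff π r U D

/-- The pure (deterministic) strategy matrix induced by a function. -/
def pureM {a b : ℕ} (f : Fin a → Fin b) : Matrix (Fin a) (Fin b) ℝ :=
  fun i j => if j = f i then 1 else 0

lemma pureM_rowStochastic {a b : ℕ} (f : Fin a → Fin b) : RowStochastic (pureM f) := by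
  constructor
  · intro i j; unfold pureM; split <;> norm_num
  · intro i; simp [pureM]

/-- payoff rearranged by columns of D. -/
lemma payoff_rearrange {m n o : ℕ} (π : Fin m → ℝ) (r : Fin m → Fin o → ℝ)
    (U : Matrix (Fin m) (Fin n) ℝ) (D : Matrix (Fin n) (Fin o) ℝ) :
    payoff π r U D = ∑ j, ∑ l, D j l * ∑ i, π i * U i j * r i l := by
  unfold payoff
  simp only [Finset.mul_sum, Finset.sum_mul]
  rw [Finset.sum_comm]
  refine Finset.sum_congr rfl fun j _ => ?_
  rw [Finset.sum_comm]
  exact Finset.sum_congr rfl fun l _ => Finset.sum_congr rfl fun i _ => by ring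

/-- convex combination is at most the max. -/
lemma comb_le_max {b : ℕ} (hb : 0 < b) (w c : Fin b → ℝ) (hw : ∀ l, 0 ≤ w l)
    (hsum : ∑ l, w l = 1) : ∃ l0, ∑ l, w l * c l ≤ c l0 := by
  have : Nonempty (Fin b) := ⟨⟨0, hb⟩⟩
  obtain ⟨l0, _, hl0⟩ := Finset.exists_max_image Finset.univ c ⟨Classical.arbitrary _, Finset.mem_univ _⟩
  refine ⟨l0, ?_⟩
  calc ∑ l, w l * c l ≤ ∑ l, w l * c l0 := by
        refine Finset.sum_le_sum fun l _ => mul_le_mul_of_nonneg_left (hl0 l (Finset.mem_univ l)) (hw l)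
    _ = c l0 := by rw [← Finset.sum_mul, hsum, one_mul]

/-- Replacing D by a pure strategy can only improve. -/
lemma improve_D {m n o : ℕ} (π : Fin m → ℝ) (r : Fin m → Fin o → ℝ)
    (ho : 0 < o)
    (U : Matrix (Fin m) (Fin n) ℝ) (D : Matrix (Fin n) (Fin o) ℝ)
    (hD : RowStochastic D) :
    ∃ g : Fin n → Fin o, payoff π r U D ≤ payoff π r U (pureM g) := by
  have key : ∀ j : Fin n, ∃ l0, ∑ l, D j l * (∑ i, π i * U i j * r i l) ≤
      ∑ i, π i * U i j * r i l0 :=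
    fun j => comb_le_max ho (D j) _ (hD.1 j) (hD.2 j)
  choose g hg using key
  refine ⟨g, ?_⟩
  rw [payoff_rearrange, payoff_rearrange]
  refine Finset.sum_le_sum fun j _ => ?_
  calc ∑ l, D j l * ∑ i, π i * U i j * r i l ≤ ∑ i, π i * U i j * r i (g j) := hg j
    _ = ∑ l, pureM g j l * ∑ i, π i * U i j * r i l := by simp [pureM]

/-- Replacing U by a pure strategy can only improve. -/
lemma improve_U {m n o : ℕ} (π : Fin m → ℝ) (r : Fin m → Fin o → ℝ)
    (hn : 0 < n) (hπ : ∀ i, 0 ≤ π i)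
    (U : Matrix (Fin m) (Fin n) ℝ) (D : Matrix (Fin n) (Fin o) ℝ)
    (hU : RowStochastic U) :
    ∃ f : Fin m → Fin n, payoff π r U D ≤ payoff π r (pureM f) D := by
  have key : ∀ i : Fin m, ∃ j0, ∑ j, U i j * (∑ l, D j l * r i l) ≤
      ∑ l, D j0 l * r i l :=
    fun i => comb_le_max hn (U i) _ (hU.1 i) (hU.2 i)
  choose f hf using key
  refine ⟨f, ?_⟩
  unfold payoff
  refine Finset.sum_le_sum fun i _ => ?_
  have : ∑ j, pureM f i j * ∑ l, D j l * r i l = ∑ l, D (f i) l * r i l := by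
    simp [pureM]
  rw [this]
  exact mul_le_mul_of_nonneg_left (hf i) (hπ i)

theorem optimal_iff_efficient_equilibrium {m n o : ℕ}
    (π : Fin m → ℝ) (r : Fin m → Fin o → ℝ)
    (hn : 0 < n) (ho : 0 < o)
    (hπ : (∀ i, 0 ≤ π i) ∧ ∑ i, π i = 1) (hr : ∀ i l, 0 ≤ r i l) :
    (∀ (U : Matrix (Fin m) (Fin n) ℝ) (D : Matrix (Fin n) (Fin o) ℝ),
      Optimal π r U D ↔
        (Nash π r U D ∧
          ∀ (U' : Matrix (Fin m) (Fin n) ℝ) (D' : Matrix (Fin n) (Fin o) ℝ),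
            Nash π r U' D' → payoff π r U' D' ≤ payoff π r U D)) ∧
    (∃ (U : Matrix (Fin m) (Fin n) ℝ) (D : Matrix (Fin n) (Fin o) ℝ),
      Optimal π r U D) := by
  -- existence of an optimal profile via pure strategies
  have hne : Nonempty ((Fin m → Fin n) × (Fin n → Fin o)) := by
    have : Nonempty (Fin n) := ⟨⟨0, hn⟩⟩
    have : Nonempty (Fin o) := ⟨⟨0, ho⟩⟩
    exact ⟨⟨fun _ => Classical.arbitrary _, fun _ => Classical.arbitrary _⟩⟩
  obtain ⟨p, _, hp⟩ := Finset.exists_max_image Finset.univ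
    (fun p : (Fin m → Fin n) × (Fin n → Fin o) => payoff π r (pureM p.1) (pureM p.2))
    ⟨Classical.arbitrary _, Finset.mem_univ _⟩
  have hopt : Optimal π r (pureM p.1) (pureM p.2) := by
    refine ⟨pureM_rowStochastic _, pureM_rowStochastic _, fun U' D' hU' hD' => ?_⟩
    obtain ⟨f, hf⟩ := improve_U π r hn hπ.1 U' D' hU'
    obtain ⟨g, hg⟩ := improve_D π r ho (pureM f) D' hD'
    exact le_trans hf (le_trans hg (hp (f, g) (Finset.mem_univ _)))
  have exists_opt : ∃ U D, Optimal π r U D := ⟨_, _, hopt⟩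
  -- Optimal → Nash
  have opt_nash : ∀ (U : Matrix (Fin m) (Fin n) ℝ) (D : Matrix (Fin n) (Fin o) ℝ),
      Optimal π r U D → Nash π r U D := by
    intro U D h
    exact ⟨h.1, h.2.1, fun U' hU' => h.2.2 U' D hU' h.2.1,
      fun D' hD' => h.2.2 U D' h.1 hD'⟩
  refine ⟨fun U D => ⟨fun h => ⟨opt_nash U D h, fun U' D' hN => h.2.2 U' D' hN.1 hN.2.1⟩,
    fun ⟨hN, hEff⟩ => ⟨hN.1, hN.2.1, fun U' D' hU' hD' => ?_⟩⟩, exists_opt⟩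
  obtain ⟨U0, D0, h0⟩ := exists_opt
  exact le_trans (h0.2.2 U' D' hU' hD') (hEff U0 D0 (opt_nash U0 D0 h0))
end

section
/- Under the Roth–Erev reinforcement update for the DBMS (with fixed user strategy U), for any query j and result ℓ, the conditional expected one-step change of the strategy entry satisfies E[D⁺_{jℓ} | F_t] − D_{jℓ} = D_{jℓ} · Σ_i π_i U_{ij} ( r_{iℓ}/(R̄_j + r_{iℓ}) − Σ_{ℓ'} D_{jℓ'} · r_{iℓ'}/(R̄_j + r_{iℓ'}) ), where R̄_j = Σ_{ℓ'} R_{jℓ'}. -/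
/-!
Only the row `j` of `R` can change, and it changes only when the user sends query `j`.
Conditioning on that event, the result `l0` reinforced is drawn from the current row
distribution `D j`; writing `R j l = D j l * S` with `S = ∑ l', R j l'`, the new share of `l`
is `D j l * (1 - r l0 / (S + r l0))`, plus `r l / (S + r l)` when `l0 = l`. Averaging over
`l0` gives the bracket of the drift, and averaging over the query and the intent weights it
by `π i * U i j`.
-/

open Finset

section Reinforcement

variable {ι : Type*} [Fintype ι] [DecidableEq ι]

noncomputable def reinforcedShare (x : ι → ℝ) (k : ι) (c : ℝ) (l : ι) : ℝ :=
  (x l + if l = k then c else 0) / ((∑ l', x l') + c)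

theorem sum_add_ite_eq (x : ι → ℝ) (k : ι) (c : ℝ) :
    ∑ l, (x l + if l = k then c else 0) = (∑ l, x l) + c := by
  simp [sum_add_distrib]

omit [DecidableEq ι] in
theorem sum_div_sum_eq_one {x : ι → ℝ} (hx : ∑ l, x l ≠ 0) : ∑ l, x l / ∑ l', x l' = 1 := by
  rw [← sum_div, div_self hx]

theorem sum_mul_reinforcedShare_sub {x : ι → ℝ} (c : ι → ℝ) (hx : ∑ l, x l ≠ 0)
    (hc : ∀ k, (∑ l, x l) + c k ≠ 0) (l : ι) :
    ∑ k, x k / (∑ l', x l') * reinforcedShare x k (c k) l - x l / ∑ l', x l' =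
      x l / (∑ l', x l') * (c l / ((∑ l', x l') + c l) -
        ∑ k, x k / (∑ l', x l') * (c k / ((∑ l', x l') + c k))) := by
  set s := ∑ l', x l' with hs
  set p : ι → ℝ := fun k => x k / s
  change ∑ k, p k * reinforcedShare x k (c k) l - p l =
    p l * (c l / (s + c l) - ∑ k, p k * (c k / (s + c k)))
  have hp : ∑ k, p k = 1 := sum_div_sum_eq_one hx
  -- `x l / (s + c k) = p l * (1 - c k / (s + c k))`: reinforcing `k` dilutes every share
  have hsplit : ∀ k, p k * reinforcedShare x k (c k) l =
      p l * (p k - p k * (c k / (s + c k))) + if l = k then p k * (c k / (s + c k)) else 0 := by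
    intro k
    have hck := hc k
    simp only [reinforcedShare, p, ← hs]
    split_ifs with hlk
    · subst hlk; field_simp; ring
    · field_simp; ring
  simp only [hsplit, sum_add_distrib, ← mul_sum, sum_sub_distrib, hp, sum_ite_eq, mem_univ,
    if_true]
  ring

end Reinforcement

theorem sum_mul_ite_eq_of_sum_eq_one {ι : Type*} [Fintype ι] [DecidableEq ι] {w : ι → ℝ}
    (hw : ∑ i, w i = 1) (j : ι) (a b : ℝ) :
    ∑ i, w i * (if j = i then a else b) = b + w j * (a - b) := by
  have h : ∀ i, w i * (if j = i then a else b) = w i * b + if j = i then w i * (a - b) else 0 := by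
    intro i; split_ifs <;> ring
  rw [sum_congr rfl fun i _ => h i, sum_add_distrib, ← sum_mul, hw, sum_ite_eq]
  simp

theorem sum_mul_const_add_of_sum_eq_one {ι : Type*} [Fintype ι] {w : ι → ℝ}
    (hw : ∑ i, w i = 1) (b : ℝ) (g : ι → ℝ) :
    ∑ i, w i * (b + g i) = b + ∑ i, w i * g i := by
  simp only [mul_add, sum_add_distrib, ← sum_mul, hw, one_mul]

/-- The conditional expectation given the history is the average over the one-step
randomness: intent `i0` with probability `π i0`, query `j0` with probability `U i0 j0`,
result `l0` with probability `D j0 l0`. -/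
theorem dbms_reinforcement_drift {m n o : ℕ}
    (π : Fin m → ℝ) (U : Matrix (Fin m) (Fin n) ℝ)
    (r : Fin m → Fin o → ℝ) (R : Matrix (Fin n) (Fin o) ℝ)
    (hπ : (∀ i, 0 ≤ π i) ∧ ∑ i, π i = 1) (hU : RowStochastic U)
    (hr : ∀ i l, 0 ≤ r i l) (hR : ∀ j l, 0 < R j l)
    (D : Matrix (Fin n) (Fin o) ℝ)
    (hD : ∀ j l, D j l = R j l / ∑ l', R j l')
    (Rplus : Fin m → Fin n → Fin o → Matrix (Fin n) (Fin o) ℝ)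
    (hRplus : ∀ i0 j0 l0 j l,
      Rplus i0 j0 l0 j l = R j l + if j = j0 ∧ l = l0 then r i0 l0 else 0)
    (Dplus : Fin m → Fin n → Fin o → Matrix (Fin n) (Fin o) ℝ)
    (hDplus : ∀ i0 j0 l0 j l,
      Dplus i0 j0 l0 j l = Rplus i0 j0 l0 j l / ∑ l', Rplus i0 j0 l0 j l')
    (j : Fin n) (l : Fin o) :
    (∑ i0, ∑ j0, ∑ l0, π i0 * U i0 j0 * D j0 l0 * Dplus i0 j0 l0 j l) - D j l =
      D j l * ∑ i, π i * U i j *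
        (r i l / ((∑ l', R j l') + r i l) -
          ∑ l', D j l' * (r i l' / ((∑ l'', R j l'') + r i l'))) := by
  have hS : ∀ j, 0 < ∑ l', R j l' := fun j => sum_pos (fun l' _ => hR j l') ⟨l, mem_univ l⟩
  have hrow : ∀ j0, ∑ l0, D j0 l0 = 1 := fun j0 => by
    simp only [hD]; exact sum_div_sum_eq_one (hS j0).ne'
  have hDplus_row : ∀ i0 j0 l0, Dplus i0 j0 l0 j l =
      if j = j0 then reinforcedShare (R j) l0 (r i0 l0) l else D j l := by
    intro i0 j0 l0
    by_cases hj : j = j0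
    · subst hj; simp [hDplus, hRplus, reinforcedShare, sum_add_ite_eq]
    · simp [hDplus, hRplus, hj, hD]
  have hinner : ∀ i0 j0, ∑ l0, D j0 l0 * Dplus i0 j0 l0 j l =
      if j = j0 then ∑ l0, D j l0 * reinforcedShare (R j) l0 (r i0 l0) l else D j l := by
    intro i0 j0
    split_ifs with hj
    · subst hj; simp [hDplus_row]
    · simp [hDplus_row, hj, ← sum_mul, hrow]
  calc (∑ i0, ∑ j0, ∑ l0, π i0 * U i0 j0 * D j0 l0 * Dplus i0 j0 l0 j l) - D j l
      = (∑ i0, π i0 * ∑ j0, U i0 j0 * ∑ l0, D j0 l0 * Dplus i0 j0 l0 j l) - D j l := by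
        simp only [mul_sum, mul_assoc]
    _ = ∑ i0, π i0 * (U i0 j *
          (∑ l0, D j l0 * reinforcedShare (R j) l0 (r i0 l0) l - D j l)) := by
        simp only [hinner, sum_mul_ite_eq_of_sum_eq_one (hU.2 _)]
        rw [sum_mul_const_add_of_sum_eq_one hπ.2, add_sub_cancel_left]
    _ = _ := by
        simp only [hD, sum_mul_reinforcedShare_sub (r _) (hS j).ne'
          (fun k => (add_pos_of_pos_of_nonneg (hS j) (hr _ k)).ne'), mul_sum]
        exact sum_congr rfl fun i _ => by ring
end

section
/- Under the user's Roth–Erev reinforcement update (with the DBMS strategy D fixed within the step, m = o, and reward r_{iℓ} = 1 if i = ℓ and 0 otherwise), for each intent i and query j: E[U⁺_{ij} | F_t] − U_{ij} = (π_i U_{ij}/(Σ_ℓ S_{iℓ} + 1)) · (D_{ji} − u^i(t)), where u^i(t) = Σ_{j'} U_{ij'}(t) D_{j'i}(t). -/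
open Finset

/-- One-step conditional drift of the user strategy under Roth–Erev reinforcement
with identity-match reward (`m = o`, reward 1 iff the returned result equals the
intent). Nature picks intent `i0` with probability `π i0`, the user picks query
`j0` with probability `U i0 j0`, the DBMS returns `i'` with probability `D j0 i'`,
and `S` is reinforced at `(i0, j0)` by 1 iff `i' = i0`. -/
theorem user_reinforcement_drift {m n : ℕ}
    (π : Fin m → ℝ) (S : Matrix (Fin m) (Fin n) ℝ)
    (D : Matrix (Fin n) (Fin m) ℝ)
    (hπ : (∀ i, 0 ≤ π i) ∧ ∑ i, π i = 1)
    (hS : ∀ i j, 0 < S i j) (hD : RowStochastic D)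
    (U : Matrix (Fin m) (Fin n) ℝ)
    (hU : ∀ i j, U i j = S i j / ∑ j', S i j')
    (Splus : Fin m → Fin n → Fin m → Matrix (Fin m) (Fin n) ℝ)
    (hSplus : ∀ i0 j0 i' i j,
      Splus i0 j0 i' i j = S i j + if i = i0 ∧ j = j0 ∧ i' = i0 then 1 else 0)
    (Uplus : Fin m → Fin n → Fin m → Matrix (Fin m) (Fin n) ℝ)
    (hUplus : ∀ i0 j0 i' i j,
      Uplus i0 j0 i' i j = Splus i0 j0 i' i j / ∑ j', Splus i0 j0 i' i j')
    (i : Fin m) (j : Fin n) :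
    (∑ i0, ∑ j0, ∑ i', π i0 * U i0 j0 * D j0 i' * Uplus i0 j0 i' i j) - U i j =
      (π i * U i j / ((∑ j', S i j') + 1)) *
        (D j i - ∑ j', U i j' * D j' i) := by
  obtain ⟨hπ0, hπ1⟩ := hπ
  obtain ⟨hD0, hD1⟩ := hD
  have hSigpos : ∀ i0 : Fin m, 0 < ∑ j', S i0 j' :=
    fun i0 => Finset.sum_pos (fun j' _ => hS i0 j') ⟨j, Finset.mem_univ j⟩
  have hSig1 : ((∑ j', S i j') + 1) ≠ 0 := by
    have := hSigpos i; intro h; linarith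
  have hUrow : ∀ i0 : Fin m, ∑ j0, U i0 j0 = 1 := by
    intro i0
    simp only [hU]
    rw [← Finset.sum_div, div_self (hSigpos i0).ne']
  set c : Fin n → ℝ := fun j0 =>
    ((if j = j0 then (1:ℝ) else 0) - U i j) / ((∑ j', S i j') + 1) with hc
  have key : ∀ i0 j0 i', Uplus i0 j0 i' i j =
      U i j + if i0 = i ∧ i' = i then c j0 else 0 := by
    intro i0 j0 i'
    rw [hUplus]
    by_cases h : i0 = i ∧ i' = i
    · rw [if_pos h]
      obtain ⟨h1, h2⟩ := h
      have hnum : ∀ j', Splus i0 j0 i' i j' = S i j' + if j' = j0 then 1 else 0 := by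
        intro j'
        rw [hSplus, h1, h2]
        simp
      have hden : ∑ j', Splus i0 j0 i' i j' = (∑ j', S i j') + 1 := by
        simp only [hnum]
        rw [Finset.sum_add_distrib]
        simp
      rw [hden, hnum j]
      simp only [hc]
      rw [hU]
      generalize (if j = j0 then (1:ℝ) else 0) = e
      have hne := (hSigpos i).ne'
      field_simp
      ring
    · rw [if_neg h, add_zero]
      have hnum : ∀ j', Splus i0 j0 i' i j' = S i j' := by
        intro j'
        rw [hSplus, if_neg, add_zero]
        rintro ⟨ha, -, hb⟩
        exact h ⟨ha.symm, by rw [hb, ← ha]⟩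
      simp only [hnum]
      exact (hU i j).symm
  have step1 : ∀ i0 j0, ∑ i', π i0 * U i0 j0 * D j0 i' * Uplus i0 j0 i' i j
      = π i0 * U i0 j0 * U i j
        + (if i0 = i then π i0 * U i0 j0 * D j0 i * c j0 else 0) := by
    intro i0 j0
    simp only [key, mul_add]
    rw [Finset.sum_add_distrib]
    congr 1
    · rw [← Finset.sum_mul, ← Finset.mul_sum, hD1 j0, mul_one]
    · by_cases h : i0 = i
      · simp [h, mul_ite, mul_zero, Finset.sum_ite_eq']
      · simp [h]
  have step2 : ∀ i0, ∑ j0, ∑ i', π i0 * U i0 j0 * D j0 i' * Uplus i0 j0 i' i j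
      = π i0 * U i j
        + (if i0 = i then π i0 * ∑ j0, U i j0 * D j0 i * c j0 else 0) := by
    intro i0
    simp only [step1]
    rw [Finset.sum_add_distrib]
    congr 1
    · rw [← Finset.sum_mul, ← Finset.mul_sum, hUrow i0, mul_one]
    · by_cases h : i0 = i
      · subst h
        simp only [eq_self_iff_true, if_true]
        rw [Finset.mul_sum]
        exact Finset.sum_congr rfl fun j0 _ => by ring
      · simp [h]
  rw [Finset.sum_congr rfl (fun i0 _ => step2 i0), Finset.sum_add_distrib,
    ← Finset.sum_mul, hπ1, one_mul]
  rw [Finset.sum_ite_eq' Finset.univ i (fun i0 => π i0 * ∑ j0, U i j0 * D j0 i * c j0)]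
  simp only [Finset.mem_univ, if_true]
  have hT : ∑ j0, U i j0 * D j0 i * c j0
      = (U i j / ((∑ j', S i j') + 1)) * (D j i - ∑ j', U i j' * D j' i) := by
    simp only [hc, div_eq_mul_inv, sub_mul, mul_sub]
    rw [Finset.sum_sub_distrib]
    congr 1
    · have h1 : ∀ j0, U i j0 * D j0 i * ((if j = j0 then (1:ℝ) else 0) * ((∑ j', S i j') + 1)⁻¹)
          = if j = j0 then U i j0 * D j0 i * ((∑ j', S i j') + 1)⁻¹ else 0 := by
        intro j0; by_cases h : j = j0 <;> simp [h]
      rw [Finset.sum_congr rfl (fun j0 _ => h1 j0),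
        Finset.sum_ite_eq Finset.univ j (fun j0 => U i j0 * D j0 i * ((∑ j', S i j') + 1)⁻¹)]
      simp only [Finset.mem_univ, if_true]
      ring
    · rw [← Finset.sum_mul]
      ring
  rw [hT]
  ring
end

section
/- With the user reinforcement dynamics above (m = o, identity-match reward), the expected one-step change of the payoff u(t) = Σ_i π_i Σ_j U_{ij}(t) D_{ji}(t) satisfies E[u(t+1) | F_t] − u(t) = Σ_i (π_i²/S̃^i)(Σ_j U_{ij} D_{ji}² − (Σ_j U_{ij} D_{ji})²) ≥ 0, where S̃^i = Σ_{j'} S_{ij'} + 1. Hence {u(t)} is a submartingale. -/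
open Finset

/-!
A draw `(i₀, j₀, i')` has probability `π i₀ * U i₀ j₀ * D j₀ i'`, and it reinforces a strategy only
when `i' = i₀`; then only row `i₀` of `S` gains one unit at `j₀`, and the mean of `D · i₀` under
that row moves by `(D j₀ i₀ - v) / (σ + 1)`, where `v` is the old mean and `σ` the old row mass.
Averaging over `j₀ ∼ U i₀` weights this by `U i₀ j₀ * D j₀ i₀`, which turns it into the variance
of `D · i₀` under `U i₀`, nonnegative by Jensen's inequality.
-/

section

variable {ι κ : Type*} [Fintype ι] [Fintype κ]

theorem sq_sum_mul_le_sum_mul_sq {w x : κ → ℝ} (hw : ∀ j, 0 ≤ w j) (hw1 : ∑ j, w j = 1) :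
    (∑ j, w j * x j) ^ 2 ≤ ∑ j, w j * x j ^ 2 := by
  simpa only [smul_eq_mul] using
    (even_two.convexOn_pow (𝕜 := ℝ)).map_sum_le (fun j _ => hw j) hw1 fun _ _ => Set.mem_univ _

theorem sum_mul_mul_sub_sum_mul (w x : κ → ℝ) :
    ∑ j, w j * x j * (x j - ∑ j', w j' * x j') = ∑ j, w j * x j ^ 2 - (∑ j, w j * x j) ^ 2 := by
  simp only [mul_sub, sum_sub_distrib, ← sum_mul]
  congr 1
  · exact sum_congr rfl fun j _ => by ring
  · ring

theorem sum_add_ite_div_sum_mul [DecidableEq κ] (s f : κ → ℝ) (j₀ : κ) (hs : 0 < ∑ j, s j) :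
    ∑ j, (s j + if j = j₀ then 1 else 0) / (∑ j', (s j' + if j' = j₀ then 1 else 0)) * f j =
      ∑ j, s j / (∑ j', s j') * f j +
        (f j₀ - ∑ j, s j / (∑ j', s j') * f j) / (∑ j', s j' + 1) := by
  have hsum : ∑ j', (s j' + if j' = j₀ then 1 else 0) = ∑ j', s j' + 1 := by
    simp [sum_add_distrib]
  have hf : ∑ j, (s j + if j = j₀ then 1 else 0) * f j = ∑ j, s j * f j + f j₀ := by
    simp [add_mul, sum_add_distrib]
  simp only [hsum, div_mul_eq_mul_div, ← sum_div, hf]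
  field_simp
  ring

theorem sum_mul_sum_mul_sum_mul_eq_one {τ : Type*} [Fintype τ] {p : ι → ℝ} {A : ι → κ → ℝ}
    {B : κ → τ → ℝ} (hp : ∑ i, p i = 1) (hA : ∀ i, ∑ j, A i j = 1) (hB : ∀ j, ∑ k, B j k = 1) :
    ∑ i, ∑ j, ∑ k, p i * A i j * B j k = 1 := by
  simp only [← mul_sum, hB, hA, mul_one, hp]

end

/-- Expected one-step change of the payoff `u = ∑ i, π i * ∑ j, U i j * D j i`
under the user's Roth–Erev reinforcement dynamics with identity-match reward:
it equals the nonnegative Jensen variance term, so the payoff process is a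
submartingale. -/
theorem user_reinforcement_payoff_submartingale {m n : ℕ}
    (π : Fin m → ℝ) (S : Matrix (Fin m) (Fin n) ℝ)
    (D : Matrix (Fin n) (Fin m) ℝ)
    (hπ : (∀ i, 0 ≤ π i) ∧ ∑ i, π i = 1)
    (hS : ∀ i j, 0 < S i j) (hD : RowStochastic D)
    (U : Matrix (Fin m) (Fin n) ℝ)
    (hU : ∀ i j, U i j = S i j / ∑ j', S i j')
    (Splus : Fin m → Fin n → Fin m → Matrix (Fin m) (Fin n) ℝ)
    (hSplus : ∀ i0 j0 i' i j,
      Splus i0 j0 i' i j = S i j + if i = i0 ∧ j = j0 ∧ i' = i0 then 1 else 0)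
    (Uplus : Fin m → Fin n → Fin m → Matrix (Fin m) (Fin n) ℝ)
    (hUplus : ∀ i0 j0 i' i j,
      Uplus i0 j0 i' i j = Splus i0 j0 i' i j / ∑ j', Splus i0 j0 i' i j') :
    (∑ i0, ∑ j0, ∑ i', π i0 * U i0 j0 * D j0 i' *
        (∑ i, π i * ∑ j, Uplus i0 j0 i' i j * D j i)) -
      (∑ i, π i * ∑ j, U i j * D j i) =
      (∑ i, (π i) ^ 2 / ((∑ j', S i j') + 1) *
        ((∑ j, U i j * (D j i) ^ 2) - (∑ j, U i j * D j i) ^ 2)) ∧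
    0 ≤ ∑ i, (π i) ^ 2 / ((∑ j', S i j') + 1) *
        ((∑ j, U i j * (D j i) ^ 2) - (∑ j, U i j * D j i) ^ 2) := by
  rcases isEmpty_or_nonempty (Fin n) with hn | hn
  · simp
  have hσ : ∀ i, 0 < ∑ j', S i j' := fun i => sum_pos (fun j _ => hS i j) univ_nonempty
  have hU1 : ∀ i, ∑ j, U i j = 1 := fun i => by simp only [hU, ← sum_div, div_self (hσ i).ne']
  have hU0 : ∀ i j, 0 ≤ U i j := fun i j => hU i j ▸ div_nonneg (hS i j).le (hσ i).le
  set v : Fin m → ℝ := fun i => ∑ j, U i j * D j i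
  set u := ∑ i, π i * v i
  have hrow : ∀ i₀ j₀ i' i, ∑ j, Uplus i₀ j₀ i' i j * D j i =
      v i + if i = i₀ ∧ i' = i₀ then (D j₀ i₀ - v i₀) / (∑ j', S i₀ j' + 1) else 0 := by
    intro i₀ j₀ i' i
    simp only [v, hUplus, hSplus, hU]
    split_ifs with h
    · obtain ⟨rfl, rfl⟩ := h
      simpa using sum_add_ite_div_sum_mul _ (fun j => D j _) j₀ (hσ _)
    · have h' : ∀ j, ¬(i = i₀ ∧ j = j₀ ∧ i' = i₀) := fun j hj => h ⟨hj.1, hj.2.2⟩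
      simp only [h', if_false, add_zero]
  have hpayoff : ∀ i₀ j₀ i', ∑ i, π i * ∑ j, Uplus i₀ j₀ i' i j * D j i =
      u + if i' = i₀ then π i₀ * ((D j₀ i₀ - v i₀) / (∑ j', S i₀ j' + 1)) else 0 := by
    intro i₀ j₀ i'
    simp only [hrow, mul_add, sum_add_distrib, u]
    by_cases h : i' = i₀ <;> simp [h]
  refine ⟨?_, sum_nonneg fun i _ => mul_nonneg (by have := hσ i; positivity)
    (sub_nonneg.2 (sq_sum_mul_le_sum_mul_sq (hU0 i) (hU1 i)))⟩
  have hp := sum_mul_sum_mul_sum_mul_eq_one hπ.2 hU1 hD.2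
  simp only [hpayoff, mul_add, sum_add_distrib, ← sum_mul, hp, one_mul, add_sub_cancel_left,
    mul_ite, mul_zero, sum_ite_eq', mem_univ, if_true]
  refine sum_congr rfl fun i _ => ?_
  rw [← sum_mul_mul_sub_sum_mul, mul_sum]
  refine sum_congr rfl fun j _ => ?_
  ring
end

section
/- In the DBMS reinforcement learning rule, the disturbance term satisfies |Ṽ_t| ≤ Σ_j o²·n / R̄_j(t)², and since at each step R̄_j(t+1) = R̄_j(t) + ε_t with ε_t ≥ ε > 0 with probability at least p > 0 (conditionally on the past), the sequence {1/R̄_j(t)²} is almost surely summable; hence {Ṽ_t} is almost surely summable. -/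
open Finset MeasureTheory Filter

/-!
Row by row, `Ṽ` is a covariance `(∑ D y)(∑ D z) - ∑ D y z` of a `[0,1]`-valued and a
`[0, R̄⁻²]`-valued variable under the probability vector `D j`, hence at most `R̄_j⁻²` in
absolute value.

For summability, let `N_t` count the steps `s < t` with `ε_s ≥ ε0`. The conditional
probability hypothesis gives `𝔼[2^{-N_{t+1}}] ≤ (1 - p/2) 𝔼[2^{-N_t}]`, so
`𝔼[2^{-N_t}] ≤ (1 - p/2)^t`; by Markov's inequality and Borel–Cantelli, almost surely
`2^{-N_t} < (1 - p/4)^t` eventually, i.e. `N_t` grows linearly. Since `R̄_j(t) ≥ ε0 N_t`,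
`R̄_j(t)⁻²` is dominated by a multiple of `t⁻²`.
-/

theorem weighted_sum_mem_Icc {ι : Type*} [Fintype ι] {w x : ι → ℝ} {a b : ℝ}
    (hw0 : ∀ i, 0 ≤ w i) (hw1 : ∑ i, w i = 1) (hx : ∀ i, x i ∈ Set.Icc a b) :
    ∑ i, w i * x i ∈ Set.Icc a b := by
  constructor
  · calc a = ∑ i, w i * a := by rw [← sum_mul, hw1, one_mul]
      _ ≤ ∑ i, w i * x i := sum_le_sum fun i _ => mul_le_mul_of_nonneg_left (hx i).1 (hw0 i)
  · calc ∑ i, w i * x i ≤ ∑ i, w i * b :=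
          sum_le_sum fun i _ => mul_le_mul_of_nonneg_left (hx i).2 (hw0 i)
      _ = b := by rw [← sum_mul, hw1, one_mul]

theorem abs_mul_sub_le_of_mem_Icc {a b e c : ℝ} (ha : a ∈ Set.Icc 0 1) (hb : b ∈ Set.Icc 0 c)
    (he : e ∈ Set.Icc 0 c) : |a * b - e| ≤ c := by
  obtain ⟨ha0, ha1⟩ := ha
  obtain ⟨hb0, hbc⟩ := hb
  obtain ⟨he0, hec⟩ := he
  rw [abs_le]
  constructor <;> nlinarith

theorem abs_weighted_covariance_le {ι : Type*} [Fintype ι] {w y z : ι → ℝ} {c : ℝ}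
    (hw0 : ∀ i, 0 ≤ w i) (hw1 : ∑ i, w i = 1) (hy : ∀ i, y i ∈ Set.Icc 0 1)
    (hz : ∀ i, z i ∈ Set.Icc 0 c) :
    |(∑ i, w i * y i) * (∑ i, w i * z i) - ∑ i, w i * y i * z i| ≤ c := by
  have hyz : ∀ i, y i * z i ∈ Set.Icc 0 c := fun i =>
    ⟨mul_nonneg (hy i).1 (hz i).1, (mul_le_of_le_one_left (hz i).1 (hy i).2).trans (hz i).2⟩
  simp only [mul_assoc]
  exact abs_mul_sub_le_of_mem_Icc (weighted_sum_mem_Icc hw0 hw1 hy)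
    (weighted_sum_mem_Icc hw0 hw1 hz) (weighted_sum_mem_Icc hw0 hw1 hyz)

theorem RowStochastic.one_le_card {a b : ℕ} {M : Matrix (Fin a) (Fin b) ℝ}
    (hM : RowStochastic M) (i : Fin a) : 1 ≤ b := by
  by_contra! hb
  have := hM.2 i
  interval_cases b
  simp at this

theorem abs_sum_disturbance_le {n o : ℕ} {D : Matrix (Fin n) (Fin o) ℝ} (hD : RowStochastic D)
    {y z : Fin n → Fin o → ℝ} {R : Fin n → ℝ} (hy : ∀ j l, y j l ∈ Set.Icc 0 1)
    (hz : ∀ j l, z j l ∈ Set.Icc 0 (1 / R j ^ 2)) {V : ℝ}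
    (hV : V = ∑ j,
      ((∑ l, D j l * y j l) * (∑ l', D j l' * z j l') - ∑ l, D j l * y j l * z j l)) :
    |V| ≤ ∑ j, ((o : ℝ) ^ 2 * n) / R j ^ 2 := by
  rw [hV]
  refine (abs_sum_le_sum_abs _ _).trans (sum_le_sum fun j _ => ?_)
  have hon : (1 : ℝ) ≤ (o : ℝ) ^ 2 * n :=
    one_le_mul_of_one_le_of_one_le (one_le_pow₀ (mod_cast hD.one_le_card j))
      (mod_cast Nat.one_le_of_lt j.isLt)
  calc _ ≤ 1 / R j ^ 2 := abs_weighted_covariance_le (hD.1 j) (hD.2 j) (hy j) (hz j)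
    _ ≤ (o : ℝ) ^ 2 * n / R j ^ 2 := div_le_div_of_nonneg_right hon (sq_nonneg _)

theorem log_div_log_mul_le_of_pow_lt_pow {b r : ℝ} {N t : ℕ} (hb0 : 0 < b) (hb1 : b < 1)
    (h : b ^ N < r ^ t) : Real.log r / Real.log b * t ≤ N := by
  have hlog := Real.log_lt_log (pow_pos hb0 N) h
  rw [Real.log_pow, Real.log_pow] at hlog
  rw [div_mul_eq_mul_div, div_le_iff_of_neg (Real.log_neg hb0 hb1)]
  linarith

theorem norm_half_pow_le_one (k : ℕ) : ‖(1 / 2 : ℝ) ^ k‖ ≤ 1 := by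
  rw [Real.norm_of_nonneg (by positivity)]
  exact pow_le_one₀ (by norm_num) (by norm_num)

theorem summable_one_div_sq_of_eventually_mul_le {R : ℕ → ℝ} {c : ℝ} (hc : 0 < c)
    (h : ∀ᶠ t in atTop, c * t ≤ R t) : Summable fun t => 1 / R t ^ 2 := by
  refine Summable.of_norm_bounded_eventually_nat
    ((Real.summable_one_div_nat_pow.mpr one_lt_two).mul_left (1 / c ^ 2)) ?_
  filter_upwards [h, eventually_ge_atTop 1] with t hR ht
  have hct : 0 < c * t := mul_pos hc (by exact_mod_cast ht)
  rw [Real.norm_of_nonneg (by positivity), one_div_mul_one_div, ← mul_pow]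
  exact one_div_le_one_div_of_le (by positivity) (pow_le_pow_left₀ hct.le hR 2)

section Expectation

variable {Ω : Type*} {m0 : MeasurableSpace Ω} {μ : Measure Ω}

theorem mul_integral_le_integral_mul_indicator [IsFiniteMeasure μ] {m : MeasurableSpace Ω}
    (hm : m ≤ m0) {g : Ω → ℝ} (hg : StronglyMeasurable[m] g) (hg0 : 0 ≤ g) (hg1 : g ≤ 1)
    {A : Set Ω} (hA : MeasurableSet[m0] A) {p : ℝ}
    (hcond : ∀ᵐ ω ∂μ, p ≤ μ[A.indicator (fun _ => (1 : ℝ)) | m] ω) :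
    p * ∫ ω, g ω ∂μ ≤ ∫ ω, g ω * A.indicator (fun _ => (1 : ℝ)) ω ∂μ := by
  have hg_bdd : ∀ᵐ ω ∂μ, ‖g ω‖ ≤ 1 :=
    ae_of_all _ fun ω => by rw [Real.norm_eq_abs, abs_of_nonneg (hg0 ω)]; exact hg1 ω
  have hg_int : Integrable g μ :=
    (integrable_const (1 : ℝ)).mono' (hg.mono hm).aestronglyMeasurable hg_bdd
  have hind_int : Integrable (A.indicator fun _ => (1 : ℝ)) μ :=
    (integrable_const 1).indicator hA
  calc p * ∫ ω, g ω ∂μ = ∫ ω, g ω * p ∂μ := by rw [mul_comm, integral_mul_const]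
    _ ≤ ∫ ω, g ω * μ[A.indicator (fun _ => (1 : ℝ)) | m] ω ∂μ := by
        refine integral_mono_ae (hg_int.mul_const p)
          (integrable_condExp.bdd_mul (hg.mono hm).aestronglyMeasurable hg_bdd) ?_
        filter_upwards [hcond] with ω hω
        exact mul_le_mul_of_nonneg_left hω (hg0 ω)
    _ = ∫ ω, μ[g * A.indicator (fun _ => (1 : ℝ)) | m] ω ∂μ :=
        integral_congr_ae (condExp_mul_of_stronglyMeasurable_left hg
          (hind_int.bdd_mul (hg.mono hm).aestronglyMeasurable hg_bdd) hind_int).symm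
    _ = ∫ ω, g ω * A.indicator (fun _ => (1 : ℝ)) ω ∂μ := integral_condExp hm

theorem le_one_of_le_condExp_indicator [IsProbabilityMeasure μ] {m : MeasurableSpace Ω}
    (hm : m ≤ m0) {B : Set Ω} (hB : MeasurableSet[m0] B) {p : ℝ}
    (hcond : ∀ᵐ ω ∂μ, p ≤ μ[B.indicator (fun _ => (1 : ℝ)) | m] ω) :
    p ≤ 1 := by
  have h := mul_integral_le_integral_mul_indicator hm (g := fun _ => 1) stronglyMeasurable_const
    (fun _ => zero_le_one) (fun _ => le_rfl) hB hcond
  simp only [integral_const, probReal_univ, smul_eq_mul, mul_one, one_mul] at h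
  rw [integral_indicator hB, setIntegral_const, smul_eq_mul, mul_one] at h
  exact h.trans measureReal_le_one

theorem ae_eventually_lt_pow_of_integral_le_pow [IsFiniteMeasure μ]
    {f : ℕ → Ω → ℝ} {q r : ℝ} (hf0 : ∀ t ω, 0 ≤ f t ω)
    (hf : ∀ t, Integrable (f t) μ)
    (hq : 0 ≤ q) (hqr : q < r) (hbound : ∀ t, ∫ ω, f t ω ∂μ ≤ q ^ t) :
    ∀ᵐ ω ∂μ, ∀ᶠ t in atTop, f t ω < r ^ t := by
  have hr : 0 < r := hq.trans_lt hqr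
  have hmarkov : ∀ t, μ {ω | r ^ t ≤ f t ω} ≤ ENNReal.ofReal ((q / r) ^ t) := by
    intro t
    have h := (mul_meas_ge_le_integral_of_nonneg (ae_of_all _ (hf0 t)) (hf t) (r ^ t)).trans
      (hbound t)
    rw [← ENNReal.ofReal_toReal (measure_ne_top μ _), ← measureReal_def]
    refine ENNReal.ofReal_le_ofReal ?_
    rw [div_pow, le_div_iff₀ (by positivity)]
    linarith
  have hgeom : Summable fun t : ℕ => (q / r) ^ t :=
    summable_geometric_of_lt_one (by positivity) ((div_lt_one hr).mpr hqr)
  have hsum : ∑' t, μ {ω | r ^ t ≤ f t ω} ≠ ⊤ := by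
    refine ne_top_of_le_ne_top ?_ (ENNReal.tsum_le_tsum hmarkov)
    rw [← ENNReal.ofReal_tsum_of_nonneg (fun t => by positivity) hgeom]
    exact ENNReal.ofReal_ne_top
  filter_upwards [ae_eventually_notMem hsum] with ω hω
  filter_upwards [hω] with t ht
  exact lt_of_not_ge ht

theorem measurableSet_le_sub_of_adapted {ℱ : Filtration ℕ m0} {X : ℕ → Ω → ℝ}
    (hX : Adapted ℱ X) (c : ℝ) (s : ℕ) :
    MeasurableSet[ℱ (s + 1)] {ω | c ≤ X (s + 1) ω - X s ω} :=
  measurableSet_le measurable_const ((hX (s + 1)).sub ((hX s).mono (ℱ.mono s.le_succ) le_rfl))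

end Expectation

section HitCount

variable {Ω : Type*} {m0 : MeasurableSpace Ω}

noncomputable def hitCount (A : ℕ → Set Ω) (t : ℕ) (ω : Ω) : ℕ :=
  ∑ s ∈ range t, (A s).indicator 1 ω

theorem hitCount_zero (A : ℕ → Set Ω) (ω : Ω) : hitCount A 0 ω = 0 := rfl

theorem hitCount_succ (A : ℕ → Set Ω) (t : ℕ) (ω : Ω) :
    hitCount A (t + 1) ω = hitCount A t ω + (A t).indicator 1 ω :=
  sum_range_succ _ _

theorem measurable_hitCount {ℱ : Filtration ℕ m0} {A : ℕ → Set Ω}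
    (hA : ∀ t, MeasurableSet[ℱ (t + 1)] (A t)) (t : ℕ) : Measurable[ℱ t] (hitCount A t) :=
  measurable_sum _ fun s hs =>
    measurable_const.indicator (ℱ.mono (mem_range.mp hs) _ (hA s))

theorem mul_hitCount_le_sum {e : ℕ → Ω → ℝ} {c : ℝ} (he : ∀ s ω, 0 ≤ e s ω)
    (t : ℕ) (ω : Ω) :
    c * hitCount (fun s => {ω | c ≤ e s ω}) t ω ≤ ∑ s ∈ range t, e s ω := by
  rw [hitCount, Nat.cast_sum, mul_sum]
  refine sum_le_sum fun s _ => ?_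
  by_cases h : c ≤ e s ω
  · simp [h]
  · simpa [h] using he s ω

variable {μ : Measure Ω} [IsProbabilityMeasure μ] {ℱ : Filtration ℕ m0} {A : ℕ → Set Ω}
  {p : ℝ}

theorem stronglyMeasurable_half_pow_hitCount (hA : ∀ t, MeasurableSet[ℱ (t + 1)] (A t))
    (t : ℕ) : StronglyMeasurable[ℱ t] fun ω => (1 / 2 : ℝ) ^ hitCount A t ω :=
  (measurable_const.pow (measurable_hitCount hA t)).stronglyMeasurable

theorem integrable_half_pow_hitCount (hA : ∀ t, MeasurableSet[ℱ (t + 1)] (A t)) (t : ℕ) :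
    Integrable (fun ω => (1 / 2 : ℝ) ^ hitCount A t ω) μ :=
  .of_bound ((stronglyMeasurable_half_pow_hitCount hA t).mono (ℱ.le t)).aestronglyMeasurable 1
    (ae_of_all _ fun _ => norm_half_pow_le_one _)

theorem integral_half_pow_hitCount_succ_le (hA : ∀ t, MeasurableSet[ℱ (t + 1)] (A t)) (t : ℕ)
    (hcond : ∀ᵐ ω ∂μ, p ≤ μ[(A t).indicator (fun _ => (1 : ℝ)) | ℱ t] ω) :
    ∫ ω, (1 / 2 : ℝ) ^ hitCount A (t + 1) ω ∂μ ≤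
      (1 - p / 2) * ∫ ω, (1 / 2 : ℝ) ^ hitCount A t ω ∂μ := by
  set W : Ω → ℝ := fun ω => (1 / 2 : ℝ) ^ hitCount A t ω
  set I : Ω → ℝ := (A t).indicator fun _ => 1
  have hW := stronglyMeasurable_half_pow_hitCount hA t
  have hWI_int : Integrable (fun ω => W ω * I ω) μ :=
    ((integrable_const 1).indicator (ℱ.le _ _ (hA t))).bdd_mul
      (hW.mono (ℱ.le t)).aestronglyMeasurable (ae_of_all _ fun _ => norm_half_pow_le_one _)
  have hstep : ∀ ω, (1 / 2 : ℝ) ^ hitCount A (t + 1) ω = W ω - 1 / 2 * (W ω * I ω) := by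
    intro ω
    by_cases h : ω ∈ A t
    · simp [W, I, hitCount_succ, pow_succ, h]; ring
    · simp [W, I, hitCount_succ, h]
  calc ∫ ω, (1 / 2 : ℝ) ^ hitCount A (t + 1) ω ∂μ
      = ∫ ω, W ω ∂μ - 1 / 2 * ∫ ω, W ω * I ω ∂μ := by
        simp only [hstep]
        rw [integral_sub (integrable_half_pow_hitCount hA t) (hWI_int.const_mul _),
          integral_const_mul]
    _ ≤ ∫ ω, W ω ∂μ - 1 / 2 * (p * ∫ ω, W ω ∂μ) := by
        gcongr
        exact mul_integral_le_integral_mul_indicator (ℱ.le t) hW (fun _ => by positivity)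
          (fun _ => pow_le_one₀ (by norm_num) (by norm_num)) (ℱ.le _ _ (hA t)) hcond
    _ = (1 - p / 2) * ∫ ω, W ω ∂μ := by ring

theorem integral_half_pow_hitCount_le (hA : ∀ t, MeasurableSet[ℱ (t + 1)] (A t))
    (hcond : ∀ t, ∀ᵐ ω ∂μ, p ≤ μ[(A t).indicator (fun _ => (1 : ℝ)) | ℱ t] ω)
    (t : ℕ) :
    ∫ ω, (1 / 2 : ℝ) ^ hitCount A t ω ∂μ ≤ (1 - p / 2) ^ t := by
  have hp1 := le_one_of_le_condExp_indicator (ℱ.le 0) (ℱ.le 1 _ (hA 0)) (hcond 0)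
  induction t with
  | zero => simp [hitCount_zero]
  | succ t ih =>
    calc ∫ ω, (1 / 2 : ℝ) ^ hitCount A (t + 1) ω ∂μ
        ≤ (1 - p / 2) * ∫ ω, (1 / 2 : ℝ) ^ hitCount A t ω ∂μ :=
          integral_half_pow_hitCount_succ_le hA t (hcond t)
      _ ≤ (1 - p / 2) * (1 - p / 2) ^ t := by gcongr; linarith
      _ = (1 - p / 2) ^ (t + 1) := (pow_succ' _ _).symm

theorem ae_eventually_mul_le_hitCount (hA : ∀ t, MeasurableSet[ℱ (t + 1)] (A t)) (hp : 0 < p)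
    (hcond : ∀ t, ∀ᵐ ω ∂μ, p ≤ μ[(A t).indicator (fun _ => (1 : ℝ)) | ℱ t] ω) :
    ∃ a : ℝ, 0 < a ∧ ∀ᵐ ω ∂μ, ∀ᶠ t in atTop, a * t ≤ hitCount A t ω := by
  have hp1 := le_one_of_le_condExp_indicator (ℱ.le 0) (ℱ.le 1 _ (hA 0)) (hcond 0)
  have hr0 : 0 < 1 - p / 4 := by linarith
  have hr1 : 1 - p / 4 < 1 := by linarith
  refine ⟨Real.log (1 - p / 4) / Real.log (1 / 2),
    div_pos_of_neg_of_neg (Real.log_neg hr0 hr1) (Real.log_neg (by norm_num) (by norm_num)), ?_⟩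
  filter_upwards [ae_eventually_lt_pow_of_integral_le_pow (q := 1 - p / 2) (r := 1 - p / 4)
    (fun t ω => by positivity) (integrable_half_pow_hitCount hA) (by linarith) (by linarith)
    (integral_half_pow_hitCount_le hA hcond)] with ω hω
  filter_upwards [hω] with t ht
  exact log_div_log_mul_le_of_pow_lt_pow (by norm_num) (by norm_num) ht

end HitCount

/-- The disturbance term `Ṽ t` in the DBMS reinforcement learning drift is
bounded by `∑ j, o² n / R̄ j t ²`, and since the accumulated rewards `R̄ j`
grow by at least `ε0 > 0` with conditional probability at least `p > 0` at
every step, `1 / R̄ j t ²` is almost surely summable; hence `Ṽ` is almost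
surely summable. -/
theorem disturbance_summable {n o : ℕ} {Ω : Type*} {m0 : MeasurableSpace Ω}
    (μ : Measure Ω) [IsProbabilityMeasure μ] (ℱ : Filtration ℕ m0)
    (Rbar : ℕ → Ω → Fin n → ℝ) (ε : ℕ → Ω → Fin n → ℝ)
    (ε0 p : ℝ) (hε0 : 0 < ε0) (hp : 0 < p)
    (hR0 : ∀ ω j, 0 < Rbar 0 ω j)
    (hεnonneg : ∀ t ω j, 0 ≤ ε t ω j)
    (hrec : ∀ t ω j, Rbar (t + 1) ω j = Rbar t ω j + ε t ω j)
    (hadapted : ∀ j, Adapted ℱ fun t ω => Rbar t ω j)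
    (hcond : ∀ t j, ∀ᵐ ω ∂μ,
      p ≤ (μ[Set.indicator {ω' | ε0 ≤ ε t ω' j} (fun _ => (1 : ℝ)) | ℱ t]) ω)
    (D : ℕ → Ω → Matrix (Fin n) (Fin o) ℝ)
    (hD : ∀ t ω, RowStochastic (D t ω))
    (y z : ℕ → Ω → Fin n → Fin o → ℝ)
    (hy : ∀ t ω j l, y t ω j l ∈ Set.Icc (0 : ℝ) 1)
    (hz : ∀ t ω j l, z t ω j l ∈ Set.Icc (0 : ℝ) (1 / (Rbar t ω j) ^ 2))
    (V : ℕ → Ω → ℝ)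
    (hV : ∀ t ω, V t ω = ∑ j,
      ((∑ l, D t ω j l * y t ω j l) * (∑ l', D t ω j l' * z t ω j l') -
        ∑ l, D t ω j l * y t ω j l * z t ω j l)) :
    (∀ t ω, |V t ω| ≤ ∑ j : Fin n, ((o : ℝ) ^ 2 * n) / (Rbar t ω j) ^ 2) ∧
    (∀ᵐ ω ∂μ, (∀ j, Summable fun t => 1 / (Rbar t ω j) ^ 2) ∧
      Summable fun t => V t ω) := by
  have hεinc : ∀ s ω j, ε s ω j = Rbar (s + 1) ω j - Rbar s ω j := fun s ω j => by
    rw [hrec]; ring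
  have hRsum : ∀ t ω j, Rbar 0 ω j + ∑ s ∈ range t, ε s ω j = Rbar t ω j := by
    intro t ω j
    simp only [hεinc, sum_range_sub (fun s => Rbar s ω j)]; ring
  have hA : ∀ j s, MeasurableSet[ℱ (s + 1)] {ω | ε0 ≤ ε s ω j} := fun j s => by
    simpa only [hεinc] using measurableSet_le_sub_of_adapted (hadapted j) ε0 s
  choose a ha hae using fun j => ae_eventually_mul_le_hitCount (hA j) hp (hcond · j)
  have hbound t ω := abs_sum_disturbance_le (hD t ω) (hy t ω) (hz t ω) (hV t ω)
  refine ⟨hbound, ?_⟩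
  filter_upwards [ae_all_iff.2 hae] with ω hω
  have hsum : ∀ j, Summable fun t => 1 / Rbar t ω j ^ 2 := fun j =>
    summable_one_div_sq_of_eventually_mul_le (mul_pos hε0 (ha j)) <| by
      filter_upwards [hω j] with t ht
      calc ε0 * a j * t = ε0 * (a j * t) := mul_assoc _ _ _
        _ ≤ ε0 * hitCount (fun s => {ω | ε0 ≤ ε s ω j}) t ω := by gcongr
        _ ≤ ∑ s ∈ range t, ε s ω j := mul_hitCount_le_sum (hεnonneg · · j) t ω
        _ ≤ Rbar t ω j := by rw [← hRsum]; linarith [hR0 ω j]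
  refine ⟨hsum, Summable.of_norm_bounded (summable_sum fun j _ => ?_) (hbound · ω)⟩
  simpa only [mul_one_div] using (hsum j).mul_left ((o : ℝ) ^ 2 * n)
end
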